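/- arXiv:2405.16767 — 3 statements merged into one kernel-verified Lean document; each statement's English description precedes it below -/
import Mathlib

section
/- Every bounded STL formula is a safety property: if φ is an STL formula in which every until operator U_{[i,j)} occurring in φ has a finite upper bound j ∈ ℕ, then φ is a safety property, i.e., every infinite signal σ with σ ⊭ φ has a finite prefix σ_f such that for all infinite signals σ', σ_f · σ' ⊭ φ. -/
/-- Syntax of discrete-time STL formulas over a variable set `V`:
`⊤ | μ ≥ d | ¬φ | φ ∨ φ' | Xφ | φ U_{[i,j)} φ'` with `i, j ∈ ℕ ∪ {+∞}`. -/
inductive STL (V : Type) : Type where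
  | top : STL V
  | atom : ((V → ℝ) → ℝ) → ℝ → STL V
  | not : STL V → STL V
  | or : STL V → STL V → STL V
  | next : STL V → STL V
  | untl : ℕ∞ → ℕ∞ → STL V → STL V → STL V

/-- Satisfaction of an STL formula by an infinite discrete-time signal at time `k`. -/
def STL.Sat {V : Type} (σ : ℕ → V → ℝ) : STL V → ℕ → Prop
  | .top, _ => True
  | .atom μ d, k => μ (σ k) ≥ d
  | .not φ, k => ¬ STL.Sat σ φ k
  | .or φ ψ, k => STL.Sat σ φ k ∨ STL.Sat σ ψ k
  | .next φ, k => STL.Sat σ φ (k + 1)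
  | .untl i j φ ψ, k =>
      ∃ l : ℕ, (k : ℕ∞) + i ≤ (l : ℕ∞) ∧ (l : ℕ∞) < (k : ℕ∞) + j ∧
        STL.Sat σ ψ l ∧ ∀ m : ℕ, k ≤ m → m < l → STL.Sat σ φ m

/-- The infinite signal obtained by concatenating a finite signal `w` with an
infinite signal `σ`. -/
def appendInf {V : Type} (w : List (V → ℝ)) (σ : ℕ → V → ℝ) : ℕ → V → ℝ :=
  fun n => if h : n < w.length then w.get ⟨n, h⟩ else σ (n - w.length)

/-- A finite signal `w` is a bad prefix for `φ` if no infinite continuation of `w`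
satisfies `φ`. -/
def BadPrefix {V : Type} (φ : STL V) (w : List (V → ℝ)) : Prop :=
  ∀ σ' : ℕ → V → ℝ, ¬ STL.Sat (appendInf w σ') φ 0

/-- `φ` is bounded: every until operator occurring in `φ` has a finite upper bound. -/
def STL.Bounded {V : Type} : STL V → Prop
  | .top => True
  | .atom _ _ => True
  | .not φ => STL.Bounded φ
  | .or φ ψ => STL.Bounded φ ∧ STL.Bounded ψ
  | .next φ => STL.Bounded φ
  | .untl _ j φ ψ => j ≠ ⊤ ∧ STL.Bounded φ ∧ STL.Bounded ψ

/-- The length-`n` prefix of an infinite signal, as a finite signal. -/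
def prefixSig {V : Type} (σ : ℕ → V → ℝ) (n : ℕ) : List (V → ℝ) :=
  (List.range n).map σ

def hor {V : Type} : STL V → ℕ
  | .top => 0
  | .atom _ _ => 1
  | .not φ => hor φ
  | .or φ ψ => max (hor φ) (hor ψ)
  | .next φ => hor φ + 1
  | .untl _ j φ ψ => j.toNat + max (hor φ) (hor ψ)

lemma sat_agree {V : Type} (φ : STL V) (hb : STL.Bounded φ) :
    ∀ σ σ' : ℕ → V → ℝ, ∀ n : ℕ, (∀ m, m < n → σ m = σ' m) →
      ∀ k : ℕ, k + hor φ ≤ n → STL.Sat σ φ k → STL.Sat σ' φ k := by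
  induction φ with
  | top => intro σ σ' n hag k hk h; trivial
  | atom μ d =>
    intro σ σ' n hag k hk h
    simp only [STL.Sat] at h ⊢
    rw [← hag k (by simpa [hor] using hk)]; exact h
  | not φ ih =>
    intro σ σ' n hag k hk h
    simp only [STL.Sat] at h ⊢
    exact fun hs => h (ih hb σ' σ n (fun m hm => (hag m hm).symm) k hk hs)
  | or φ ψ ihφ ihψ =>
    intro σ σ' n hag k hk h
    have h1 : hor φ ≤ max (hor φ) (hor ψ) := le_max_left _ _
    have h2 : hor ψ ≤ max (hor φ) (hor ψ) := le_max_right _ _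
    simp only [hor] at hk
    rcases h with h | h
    · exact Or.inl (ihφ hb.1 σ σ' n hag k (by omega) h)
    · exact Or.inr (ihψ hb.2 σ σ' n hag k (by omega) h)
  | next φ ih =>
    intro σ σ' n hag k hk h
    simp only [hor] at hk
    exact ih hb σ σ' n hag (k + 1) (by omega) h
  | untl i j φ ψ ihφ ihψ =>
    intro σ σ' n hag k hk h
    obtain ⟨hj, hbφ, hbψ⟩ := hb
    lift j to ℕ using hj with jn
    obtain ⟨l, h1, h2, hψ, hφ⟩ := h
    have hl : l < k + jn := by
      have : ((l : ℕ) : ℕ∞) < ((k + jn : ℕ) : ℕ∞) := by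
        simpa [Nat.cast_add] using h2
      exact_mod_cast this
    have h1' : hor φ ≤ max (hor φ) (hor ψ) := le_max_left _ _
    have h2' : hor ψ ≤ max (hor φ) (hor ψ) := le_max_right _ _
    simp only [hor, ENat.toNat_coe] at hk
    refine ⟨l, h1, h2, ihψ hbψ σ σ' n hag l (by omega) hψ, fun m hm1 hm2 =>
      ihφ hbφ σ σ' n hag m (by omega) (hφ m hm1 hm2)⟩

/-- Every bounded STL formula is a safety property: every infinite signal violating a bounded
formula has a bad finite prefix. -/
theorem bounded_is_safety {V : Type} (φ : STL V) (hb : STL.Bounded φ) :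
    ∀ σ : ℕ → V → ℝ, ¬ STL.Sat σ φ 0 →
      ∃ n : ℕ, ∀ σ' : ℕ → V → ℝ, ¬ STL.Sat (appendInf (prefixSig σ n) σ') φ 0 := by
  intro σ hσ
  refine ⟨hor φ, fun σ' hs => hσ ?_⟩
  have hag : ∀ m, m < hor φ → appendInf (prefixSig σ (hor φ)) σ' m = σ m := by
    intro m hm
    simp [appendInf, prefixSig, hm]
  exact sat_agree φ hb _ σ (hor φ) hag 0 (by omega) hs
end

section
/- MSB preservation under modulus switching: let q and q' be positive even integers and let p ∈ ℤ with 0 ≤ p < q. Define p' = ⌊p·q'/q + 1/2⌋ (rounding to the nearest integer). Then: (1) if p < q/2 − q/(2q'), then p' < q'/2; and (2) if p ≥ q/2 + q/(2q'), then p' ≥ q'/2. -/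
/-- MSB preservation under modulus switching: rounding `p·q'/q` to the nearest integer
preserves the most significant bit as long as `p` is at distance at least `q/(2q')` from
the boundary `q/2`. -/
theorem msb_modulus_switching (q q' : ℤ) (hq : 0 < q) (hq' : 0 < q')
    (heq : Even q) (heq' : Even q') (p : ℤ) (hp0 : 0 ≤ p) (hpq : p < q)
    (p' : ℤ) (hp' : p' = ⌊(p : ℝ) * q' / q + 1 / 2⌋) :
    ((p : ℝ) < (q : ℝ) / 2 - (q : ℝ) / (2 * q') → (p' : ℝ) < (q' : ℝ) / 2) ∧
    ((p : ℝ) ≥ (q : ℝ) / 2 + (q : ℝ) / (2 * q') → (p' : ℝ) ≥ (q' : ℝ) / 2) := by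
  have hqR : (0:ℝ) < (q:ℝ) := by exact_mod_cast hq
  have hq'R : (0:ℝ) < (q':ℝ) := by exact_mod_cast hq'
  obtain ⟨k, hk⟩ := heq'
  have hkR : (q':ℝ) = (k:ℝ) + (k:ℝ) := by rw [hk]; push_cast; ring
  have hd : (q:ℝ) / (2 * q') * (2 * q') = q := div_mul_cancel₀ _ (by positivity)
  constructor
  · intro h
    have h1 : (p:ℝ) * q' / q + 1 / 2 < (q':ℝ) / 2 := by
      have h2 : (p:ℝ) * q' / q < (q':ℝ) / 2 - 1 / 2 := by
        rw [div_lt_iff₀ hqR]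
        nlinarith [mul_lt_mul_of_pos_right h hq'R]
      linarith
    calc (p':ℝ) ≤ (p:ℝ) * q' / q + 1 / 2 := by rw [hp']; exact Int.floor_le _
      _ < (q':ℝ) / 2 := h1
  · intro h
    have h1 : (k:ℝ) ≤ (p:ℝ) * q' / q + 1 / 2 := by
      have h2 : (q':ℝ) / 2 + 1 / 2 ≤ (p:ℝ) * q' / q := by
        rw [le_div_iff₀ hqR]
        nlinarith [mul_le_mul_of_nonneg_right h (le_of_lt hq'R)]
      have h3 : (k:ℝ) = (q':ℝ) / 2 := by rw [hkR]; ring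
      linarith
    have h4 : k ≤ p' := by rw [hp']; exact Int.le_floor.mpr h1
    have h5 : (k:ℝ) ≤ (p':ℝ) := by exact_mod_cast h4
    rw [ge_iff_le, hkR]; linarith
end

section
/- Correctness of the scaling step: let q be an even integer with q ≥ 4, let M be a positive real number, and let x ∈ ℝ with |x| < M. Define the integer p = ⌊x · ⌊q/2 − 1⌋ / M + 1/2⌋ (nearest-integer rounding of the scaled value). Then |p| ≤ q/2 − 1; moreover, if additionally |x| ≥ M / ⌊q/2 − 1⌋, then x ≥ 0 if and only if p ≥ 0. -/
/-- Correctness of the scaling step of `isPositive`: scaling a real `x` with `|x| < M` by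
`⌊q/2 - 1⌋ / M` and rounding to the nearest integer yields an integer `p` with
`|p| ≤ q/2 - 1`; moreover, if `|x| ≥ M / ⌊q/2 - 1⌋`, then `x ≥ 0` iff `p ≥ 0`. -/
theorem scaling_correct (q : ℤ) (heven : Even q) (hq : 4 ≤ q) (M : ℝ) (hM : 0 < M)
    (x : ℝ) (hx : |x| < M)
    (c : ℤ) (hc : c = ⌊(q : ℝ) / 2 - 1⌋)
    (p : ℤ) (hp : p = ⌊x * (c : ℝ) / M + 1 / 2⌋) :
    |(p : ℝ)| ≤ (q : ℝ) / 2 - 1 ∧ (M / (c : ℝ) ≤ |x| → (0 ≤ x ↔ 0 ≤ p)) := by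
  obtain ⟨k, hk⟩ := heven
  subst hk
  have hk2 : (2 : ℤ) ≤ k := by linarith
  have hcval : c = k - 1 := by
    rw [hc]
    have : ((k : ℤ) + k : ℤ) = ((k : ℤ) + k) := rfl
    have h2 : (((k + k : ℤ) : ℝ)) / 2 - 1 = ((k - 1 : ℤ) : ℝ) := by push_cast; ring
    rw [h2, Int.floor_intCast]
  subst hcval
  have hc1 : (1 : ℤ) ≤ k - 1 := by linarith
  have hcR : (1 : ℝ) ≤ ((k - 1 : ℤ) : ℝ) := by exact_mod_cast hc1
  have hcpos : (0 : ℝ) < ((k - 1 : ℤ) : ℝ) := by linarith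
  set cr : ℝ := ((k - 1 : ℤ) : ℝ) with hcrdef
  set y : ℝ := x * cr / M with hy
  have habs : |y| = |x| * cr / M := by
    rw [hy, abs_div, abs_mul, abs_of_pos hM, abs_of_pos hcpos]
  have hylt : |y| < cr := by
    rw [habs, div_lt_iff₀ hM]
    calc |x| * cr < M * cr := mul_lt_mul_of_pos_right hx hcpos
    _ = cr * M := by ring
  have hylt' := (abs_lt.mp hylt)
  have hle : p ≤ k - 1 := by
    have : p < k := by
      rw [hp, Int.floor_lt]
      push_cast
      simp only [hcrdef] at hylt'
      push_cast at hylt'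
      linarith [hylt'.2]
    omega
  have hge : -(k - 1) ≤ p := by
    rw [hp]
    apply Int.le_floor.mpr
    push_cast
    simp only [hcrdef] at hylt'
    push_cast at hylt'
    linarith [hylt'.1]
  constructor
  · rw [abs_le]
    constructor
    · have : ((-(k - 1) : ℤ) : ℝ) ≤ (p : ℝ) := by exact_mod_cast hge
      push_cast at this ⊢
      linarith
    · have : ((p : ℤ) : ℝ) ≤ ((k - 1 : ℤ) : ℝ) := by exact_mod_cast hle
      push_cast at this ⊢
      linarith
  · intro hxb
    have hy1 : 1 ≤ |y| := by
      rw [habs]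
      rw [le_div_iff₀ hM]
      rw [div_le_iff₀ hcpos] at hxb
      linarith [hxb]
    constructor
    · intro hx0
      have : 1 ≤ y := by
        have : y = |y| := by
          rw [abs_of_nonneg]
          positivity
        linarith [this ▸ hy1]
      rw [hp]
      have : (1 : ℤ) ≤ ⌊y + 1/2⌋ := by
        apply Int.le_floor.mpr
        push_cast
        linarith
      omega
    · intro hp0
      by_contra hx0
      push_neg at hx0
      have hyneg : y ≤ -1 := by
        have : |y| = -y := abs_of_neg (by
          rw [hy]
          apply div_neg_of_neg_of_pos _ hM
          exact mul_neg_of_neg_of_pos hx0 hcpos)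
        linarith [this ▸ hy1]
      have : p ≤ -1 := by
        rw [hp]
        have : ⌊y + 1/2⌋ < 0 := by
          rw [Int.floor_lt]
          push_cast
          linarith
        omega
      omega
end
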